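/- Fix 0<q<1 and α>−1, and let T̃_k^{(α)} = Σ_{j=0}^{k} π̃_j^{(α)}. Then for all integers m≥0 and ℓ≥0: Σ_{k=0}^{m−1} (q^k;q^{−1})_ℓ · T̃_k^{(α)} / (λ̃_k^{(α)} π̃_k^{(α)}) = ( q^{ℓ+α+1} (q^{m−ℓ};q)_{ℓ+1} / ( (1−q^{α+1})(1−q^{ℓ+α+2}) ) ) · ( q^{ℓ+1}(1−q^{α+1})/(1−q^{ℓ+1}) + 1 − γ(m+1,α+1;q) ). -/

import Mathlib

open Finset

/-- The finite q-Pochhammer symbol `(a;q)_n = ∏_{k=0}^{n−1} (1 − a q^k)`. -/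
noncomputable def qPochN (q a : ℝ) (n : ℕ) : ℝ :=
  ∏ k ∈ Finset.range n, (1 - a * q ^ k)

/-- The infinite q-Pochhammer symbol `(a;q)_∞ = ∏_{k=0}^∞ (1 − a q^k)`. -/
noncomputable def qPochInf (q a : ℝ) : ℝ :=
  ∏' k : ℕ, (1 - a * q ^ k)

/-- `γ(u,v;q) = (q^u;q)_∞/(q^{u+v};q)_∞`. -/
noncomputable def qgamma (q u v : ℝ) : ℝ :=
  qPochInf q (q ^ u) / qPochInf q (q ^ (u + v))

/-- `r_n^{(α)} = (1−γ(n+1,α+1;q))/(1−γ(n,α+1;q))`. -/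
noncomputable def rQL (q α : ℝ) (n : ℕ) : ℝ :=
  (1 - qgamma q ((n : ℝ) + 1) (α + 1)) / (1 - qgamma q (n : ℝ) (α + 1))

/-- The birth rates `λ̃_n^{(α)} = q^{−2n−α−1}(1−q^{n+α+1})/r_n^{(α)}`. -/
noncomputable def lamQL (q α : ℝ) (n : ℕ) : ℝ :=
  q ^ (-(2 * (n : ℝ)) - α - 1) * (1 - q ^ ((n : ℝ) + α + 1)) / rQL q α n

/-- The death rates `μ̃_n^{(α)} = q^{−2n−α}(1−q^n) r_n^{(α)}`. -/
noncomputable def muQL (q α : ℝ) (n : ℕ) : ℝ :=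
  q ^ (-(2 * (n : ℝ)) - α) * (1 - q ^ (n : ℝ)) * rQL q α n

/-- `π̃_n^{(α)} = ∏_{k=0}^{n−1} λ̃_k^{(α)}/μ̃_{k+1}^{(α)}` (with `π̃_0 = 1`). -/
noncomputable def piQL (q α : ℝ) (n : ℕ) : ℝ :=
  ∏ k ∈ Finset.range n, lamQL q α k / muQL q α (k + 1)

/-- `T̃_k^{(α)} = Σ_{j=0}^{k} π̃_j^{(α)}`. -/
noncomputable def TQL (q α : ℝ) (k : ℕ) : ℝ :=
  ∑ j ∈ Finset.range (k + 1), piQL q α j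

/-- The descending q-Pochhammer symbol `(q^k;q^{−1})_ℓ = ∏_{i=0}^{ℓ−1}(1−q^{k−i})`. -/
noncomputable def qPochDesc (q : ℝ) (k ℓ : ℕ) : ℝ :=
  ∏ i ∈ Finset.range ℓ, (1 - q ^ ((k : ℝ) - (i : ℝ)))

/-!
Write `g n = 1 - γ(n, α+1; q)`, so that `r_n = g (n+1) / g n`. The functional equation
`(a;q)_∞ = (1 - a) (aq;q)_∞` gives the recurrence `γ(n+1)(1 - q^n) = γ(n)(1 - q^{n+α+1})`,
and with it `π̃_n = c (1/g (n+1) - 1/g n)` for `c = g 1 / (1 - g 1)`. Hence `T̃_k` telescopes to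
`c (1/g (k+1) - 1)` and `T̃_k / (λ̃_k π̃_k) = q^{k+α+1} g (k+1) / (1 - q^{α+1})`. The sum over `k`
is then an induction on `m`, driven by `(q^{m+1};q^{-1})_{ℓ+1} = (1 - q^{m+1}) (q^m;q^{-1})_ℓ` and
the recurrence once more. Writing the infinite products as exponentials of convergent sums of
logarithms shows they are positive, which keeps every `g n` and `γ(n+1)` away from zero.
-/

open Real

section QPochhammer

variable {q : ℝ}

lemma one_sub_mul_pow_pos (hq0 : 0 ≤ q) (hq1 : q ≤ 1) {a : ℝ} (ha0 : 0 ≤ a) (ha1 : a < 1)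
    (k : ℕ) : 0 < 1 - a * q ^ k := by
  nlinarith [mul_le_mul_of_nonneg_left (pow_le_one₀ hq0 hq1 (n := k)) ha0]

lemma summable_log_one_sub_mul_pow (hq : |q| < 1) (a : ℝ) :
    Summable fun k : ℕ => log (1 - a * q ^ k) := by
  simpa only [sub_eq_add_neg] using
    Real.summable_log_one_add_of_summable ((summable_geometric_of_abs_lt_one hq).mul_left a).neg

lemma qPochInf_eq_exp_tsum_log (hq0 : 0 ≤ q) (hq1 : q < 1) {a : ℝ} (ha0 : 0 ≤ a) (ha1 : a < 1) :
    qPochInf q a = exp (∑' k : ℕ, log (1 - a * q ^ k)) :=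
  (Real.rexp_tsum_eq_tprod (one_sub_mul_pow_pos hq0 hq1.le ha0 ha1)
    (summable_log_one_sub_mul_pow (abs_lt.2 ⟨by linarith, hq1⟩) a)).symm

lemma qPochInf_pos (hq0 : 0 ≤ q) (hq1 : q < 1) {a : ℝ} (ha0 : 0 ≤ a) (ha1 : a < 1) :
    0 < qPochInf q a := by
  rw [qPochInf_eq_exp_tsum_log hq0 hq1 ha0 ha1]
  exact exp_pos _

lemma qPochInf_lt_qPochInf (hq0 : 0 ≤ q) (hq1 : q < 1) {a b : ℝ} (hb0 : 0 ≤ b) (hba : b < a)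
    (ha1 : a < 1) : qPochInf q a < qPochInf q b := by
  have hq : |q| < 1 := abs_lt.2 ⟨by linarith, hq1⟩
  rw [qPochInf_eq_exp_tsum_log hq0 hq1 (hb0.trans hba.le) ha1,
    qPochInf_eq_exp_tsum_log hq0 hq1 hb0 (hba.trans ha1), exp_lt_exp]
  refine Summable.tsum_lt_tsum (i := 0) (fun k => ?_) ?_ (summable_log_one_sub_mul_pow hq a)
    (summable_log_one_sub_mul_pow hq b)
  · gcongr
    exact one_sub_mul_pow_pos hq0 hq1.le (hb0.trans hba.le) ha1 k
  · gcongr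
    simpa using sub_pos.2 ha1

lemma qPochInf_one (q : ℝ) : qPochInf q 1 = 0 :=
  tprod_of_exists_eq_zero (f := fun k : ℕ => 1 - 1 * q ^ k)
    ⟨0, by rw [pow_zero, mul_one, sub_self]⟩

lemma qPochInf_eq_one_sub_mul_qPochInf (hq : |q| < 1) (a : ℝ) :
    qPochInf q a = (1 - a) * qPochInf q (a * q) := by
  have hsucc (k : ℕ) : 1 - a * q ^ (k + 1) = 1 + -(a * q * q ^ k) := by ring
  have hshift : Multipliable fun k : ℕ => 1 - a * q ^ (k + 1) := by
    simp only [hsucc]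
    exact Real.multipliable_one_add_of_summable
        ((summable_geometric_of_abs_lt_one hq).mul_left (a * q)).neg
  rw [qPochInf, tprod_eq_zero_mul' (f := fun k : ℕ => 1 - a * q ^ k) hshift, qPochInf]
  simp only [pow_zero, mul_one, hsucc, sub_eq_add_neg]

end QPochhammer

section QGamma

variable {q : ℝ}

lemma qgamma_zero_left (q v : ℝ) : qgamma q 0 v = 0 := by
  simp [qgamma, qPochInf_one]

lemma qgamma_pos (hq0 : 0 < q) (hq1 : q < 1) {u v : ℝ} (hu : 0 < u) (hv : 0 < v) :
    0 < qgamma q u v :=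
  div_pos (qPochInf_pos hq0.le hq1 (rpow_nonneg hq0.le u) (rpow_lt_one hq0.le hq1 hu))
    (qPochInf_pos hq0.le hq1 (rpow_nonneg hq0.le _) (rpow_lt_one hq0.le hq1 (by linarith)))

lemma qgamma_lt_one (hq0 : 0 < q) (hq1 : q < 1) {u v : ℝ} (hu : 0 ≤ u) (hv : 0 < v) :
    qgamma q u v < 1 := by
  rcases hu.eq_or_lt with rfl | hu
  · rw [qgamma_zero_left]
    exact one_pos
  rw [qgamma, div_lt_one
    (qPochInf_pos hq0.le hq1 (rpow_nonneg hq0.le _) (rpow_lt_one hq0.le hq1 (by linarith)))]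
  exact qPochInf_lt_qPochInf hq0.le hq1 (rpow_nonneg hq0.le _)
    (rpow_lt_rpow_of_exponent_gt hq0 hq1 (by linarith)) (rpow_lt_one hq0.le hq1 hu)

lemma qgamma_add_one_mul (hq0 : 0 < q) (hq1 : q < 1) {u v : ℝ} (huv : 0 < u + v) :
    qgamma q (u + 1) v * (1 - q ^ u) = qgamma q u v * (1 - q ^ (u + v)) := by
  have hq : |q| < 1 := abs_lt.2 ⟨by linarith, hq1⟩
  have hden : 0 < qPochInf q (q ^ (u + v + 1)) :=
    qPochInf_pos hq0.le hq1 (rpow_nonneg hq0.le _) (rpow_lt_one hq0.le hq1 (by linarith))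
  have hfac : 0 < 1 - q ^ (u + v) := sub_pos.2 (rpow_lt_one hq0.le hq1 huv)
  rw [qgamma, qgamma, qPochInf_eq_one_sub_mul_qPochInf hq (q ^ u),
    qPochInf_eq_one_sub_mul_qPochInf hq (q ^ (u + v)), ← rpow_add_one hq0.ne',
    ← rpow_add_one hq0.ne', add_right_comm u 1 v]
  field_simp

end QGamma

section DescendingQPochhammer

lemma qPochDesc_eq_zero_of_lt (q : ℝ) {k ℓ : ℕ} (h : k < ℓ) : qPochDesc q k ℓ = 0 :=
  prod_eq_zero (mem_range.2 h) (by rw [sub_self, rpow_zero, sub_self])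

lemma qPochDesc_succ_right (q : ℝ) (k ℓ : ℕ) :
    qPochDesc q k (ℓ + 1) = qPochDesc q k ℓ * (1 - q ^ ((k : ℝ) - ℓ)) :=
  prod_range_succ _ _

lemma qPochDesc_succ_succ (q : ℝ) (k ℓ : ℕ) :
    qPochDesc q (k + 1) (ℓ + 1) = qPochDesc q k ℓ * (1 - q ^ (k + 1)) := by
  rw [qPochDesc, prod_range_succ', qPochDesc, Nat.cast_zero, sub_zero, rpow_natCast]
  congr 1
  refine prod_congr rfl fun i _ => ?_
  push_cast
  rw [add_sub_add_right_eq_sub]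

lemma prod_range_one_sub_rpow_eq_qPochDesc (q : ℝ) (m ℓ : ℕ) :
    ∏ i ∈ range (ℓ + 1), (1 - q ^ ((m : ℝ) - ℓ + i)) = qPochDesc q m (ℓ + 1) := by
  rw [qPochDesc, ← prod_range_reflect]
  refine prod_congr rfl fun i hi => ?_
  rw [Nat.add_sub_cancel, Nat.cast_sub (Nat.lt_succ_iff.1 (mem_range.1 hi))]
  congr 2
  ring

end DescendingQPochhammer

section BirthDeath

variable {q α : ℝ}

noncomputable def gQL (q α : ℝ) (n : ℕ) : ℝ := 1 - qgamma q n (α + 1)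

lemma gQL_zero (q α : ℝ) : gQL q α 0 = 1 := by
  simp [gQL, qgamma_zero_left]

lemma gQL_pos (hq0 : 0 < q) (hq1 : q < 1) (hα : -1 < α) (n : ℕ) : 0 < gQL q α n :=
  sub_pos.2 (qgamma_lt_one hq0 hq1 n.cast_nonneg (by linarith))

lemma gQL_succ_lt_one (hq0 : 0 < q) (hq1 : q < 1) (hα : -1 < α) (n : ℕ) :
    gQL q α (n + 1) < 1 :=
  sub_lt_self _ (qgamma_pos hq0 hq1 (by positivity) (by linarith))

lemma one_sub_gQL_succ_mul (hq0 : 0 < q) (hq1 : q < 1) (hα : -1 < α) (n : ℕ) :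
    (1 - gQL q α (n + 1)) * (1 - q ^ n) = (1 - gQL q α n) * (1 - q ^ n * q ^ (α + 1)) := by
  have h := qgamma_add_one_mul hq0 hq1 (u := n) (v := α + 1)
    (by linarith [(n.cast_nonneg : (0 : ℝ) ≤ n)])
  rw [rpow_add hq0, rpow_natCast] at h
  simpa only [gQL, sub_sub_cancel, Nat.cast_succ] using h

lemma one_sub_pow_mul_rpow_pos (hq0 : 0 < q) (hq1 : q < 1) (hα : -1 < α) (k : ℕ) :
    0 < 1 - q ^ k * q ^ (α + 1) :=
  sub_pos.2 (mul_lt_one_of_nonneg_of_lt_one_right (pow_le_one₀ hq0.le hq1.le)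
    (rpow_nonneg hq0.le _) (rpow_lt_one hq0.le hq1 (by linarith)))

lemma gQL_sub_gQL_succ_mul (hq0 : 0 < q) (hq1 : q < 1) (hα : -1 < α) (n : ℕ) :
    (gQL q α n - gQL q α (n + 1)) * (1 - q ^ n * q ^ (α + 1))
      = (1 - q ^ (α + 1)) * q ^ n * (1 - gQL q α (n + 1)) := by
  linear_combination one_sub_gQL_succ_mul hq0 hq1 hα n

lemma gQL_succ_sub_gQL_succ_succ_mul (hq0 : 0 < q) (hq1 : q < 1) (hα : -1 < α) (n : ℕ) :
    (gQL q α (n + 1) - gQL q α (n + 2)) * (1 - q ^ (n + 1))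
      = q * (1 - q ^ n * q ^ (α + 1)) * (gQL q α n - gQL q α (n + 1)) := by
  linear_combination
    one_sub_gQL_succ_mul hq0 hq1 hα (n + 1) - q * one_sub_gQL_succ_mul hq0 hq1 hα n

lemma rQL_eq (q α : ℝ) (n : ℕ) : rQL q α n = gQL q α (n + 1) / gQL q α n := by
  simp [rQL, gQL]

lemma lamQL_eq (hq0 : 0 < q) (n : ℕ) :
    lamQL q α n = (1 - q ^ n * q ^ (α + 1)) * gQL q α n
      / (q ^ (2 * n) * q ^ (α + 1) * gQL q α (n + 1)) := by
  rw [lamQL, rQL_eq, div_div_eq_mul_div,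
    show -(2 * (n : ℝ)) - α - 1 = -(((2 * n : ℕ) : ℝ) + (α + 1)) by push_cast; ring,
    show (n : ℝ) + α + 1 = n + (α + 1) by ring, rpow_neg hq0.le, rpow_add hq0 _ (α + 1),
    rpow_add hq0 _ (α + 1), rpow_natCast, rpow_natCast]
  ring

lemma muQL_succ_eq (hq0 : 0 < q) (n : ℕ) :
    muQL q α (n + 1) = (1 - q ^ (n + 1)) * gQL q α (n + 2)
      / (q ^ (2 * n + 1) * q ^ (α + 1) * gQL q α (n + 1)) := by
  rw [muQL, rQL_eq, show -(2 * ((n + 1 : ℕ) : ℝ)) - α = -(((2 * n + 1 : ℕ) : ℝ) + (α + 1)) by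
      push_cast; ring,
    rpow_neg hq0.le, rpow_add hq0 _ (α + 1), rpow_natCast, rpow_natCast]
  ring

lemma lamQL_div_muQL_succ (hq0 : 0 < q) (hq1 : q < 1) (hα : -1 < α) (n : ℕ) :
    lamQL q α n / muQL q α (n + 1)
      = q * (1 - q ^ n * q ^ (α + 1)) * gQL q α n / ((1 - q ^ (n + 1)) * gQL q α (n + 2)) := by
  have hgn1 := gQL_pos hq0 hq1 hα (n + 1)
  have hx := rpow_pos_of_pos hq0 (α + 1)
  rw [lamQL_eq hq0, muQL_succ_eq hq0]
  field_simp
  ring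

lemma piQL_eq (hq0 : 0 < q) (hq1 : q < 1) (hα : -1 < α) (n : ℕ) :
    piQL q α n
      = gQL q α 1 / (1 - gQL q α 1) * (1 / gQL q α (n + 1) - 1 / gQL q α n) := by
  have hg1 := gQL_pos hq0 hq1 hα 1
  have hγ1 : 0 < 1 - gQL q α 1 := sub_pos.2 (gQL_succ_lt_one hq0 hq1 hα 0)
  induction n with
  | zero =>
    rw [piQL, prod_range_zero, gQL_zero]
    field_simp
  | succ n ih =>
    have hgn := gQL_pos hq0 hq1 hα n
    have hgn1 := gQL_pos hq0 hq1 hα (n + 1)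
    have hgn2 := gQL_pos hq0 hq1 hα (n + 2)
    have hqn1 := sub_pos.2 (pow_lt_one₀ hq0.le hq1 n.succ_ne_zero)
    rw [piQL, prod_range_succ, ← piQL, ih, lamQL_div_muQL_succ hq0 hq1 hα, mul_assoc]
    congr 1
    field_simp
    linear_combination -gQL_succ_sub_gQL_succ_succ_mul hq0 hq1 hα n

lemma TQL_eq (hq0 : 0 < q) (hq1 : q < 1) (hα : -1 < α) (k : ℕ) :
    TQL q α k = gQL q α 1 / (1 - gQL q α 1) * (1 / gQL q α (k + 1) - 1) := by
  simp only [TQL, piQL_eq hq0 hq1 hα, ← mul_sum]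
  rw [sum_range_sub (fun j => 1 / gQL q α j), gQL_zero, div_one]

lemma TQL_div_lamQL_mul_piQL (hq0 : 0 < q) (hq1 : q < 1) (hα : -1 < α) (k : ℕ) :
    TQL q α k / (lamQL q α k * piQL q α k)
      = q ^ (α + 1) * q ^ k * gQL q α (k + 1) / (1 - q ^ (α + 1)) := by
  have hg1 := gQL_pos hq0 hq1 hα 1
  have hγ1 : 0 < 1 - gQL q α 1 := sub_pos.2 (gQL_succ_lt_one hq0 hq1 hα 0)
  have hgk := gQL_pos hq0 hq1 hα k
  have hgk1 := gQL_pos hq0 hq1 hα (k + 1)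
  have hγk1 := sub_pos.2 (gQL_succ_lt_one hq0 hq1 hα k)
  have hqk := pow_pos hq0 k
  have hx := rpow_pos_of_pos hq0 (α + 1)
  have h1x := sub_pos.2 (rpow_lt_one hq0.le hq1 (show 0 < α + 1 by linarith))
  have hxk := one_sub_pow_mul_rpow_pos hq0 hq1 hα k
  have hΔ := eq_div_of_mul_eq hxk.ne' (gQL_sub_gQL_succ_mul hq0 hq1 hα k)
  rw [TQL_eq hq0 hq1 hα, piQL_eq hq0 hq1 hα, lamQL_eq hq0, div_sub_div _ _ hgk1.ne' hgk.ne',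
    one_mul, mul_one, hΔ]
  field_simp
  ring

lemma sum_range_qPochDesc_mul_gQL (hq0 : 0 < q) (hq1 : q < 1) (hα : -1 < α) (m ℓ : ℕ) :
    ∑ k ∈ range m, qPochDesc q k ℓ * (q ^ (α + 1) * q ^ k * gQL q α (k + 1) / (1 - q ^ (α + 1)))
      = q ^ ℓ * q ^ (α + 1) * qPochDesc q m (ℓ + 1)
          / ((1 - q ^ (α + 1)) * (1 - q ^ (ℓ + 1) * q ^ (α + 1)))
        * (q ^ (ℓ + 1) * (1 - q ^ (α + 1)) / (1 - q ^ (ℓ + 1)) + gQL q α (m + 1)) := by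
  have h1x := sub_pos.2 (rpow_lt_one hq0.le hq1 (show 0 < α + 1 by linarith))
  have hxℓ : 1 - q ^ (α + 1) * q ^ (ℓ + 1) ≠ 0 := by
    rw [mul_comm]
    exact (one_sub_pow_mul_rpow_pos hq0 hq1 hα (ℓ + 1)).ne'
  have hqℓ := sub_pos.2 (pow_lt_one₀ hq0.le hq1 ℓ.succ_ne_zero)
  have hℓ := pow_pos hq0 ℓ
  induction m with
  | zero =>
    rw [sum_range_zero, qPochDesc_eq_zero_of_lt q ℓ.succ_pos]
    ring
  | succ m ih =>
    rw [sum_range_succ, ih, qPochDesc_succ_succ, qPochDesc_succ_right, rpow_sub hq0,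
      rpow_natCast, rpow_natCast]
    have R := one_sub_gQL_succ_mul hq0 hq1 hα (m + 1)
    field_simp
    linear_combination q ^ ℓ * qPochDesc q m ℓ * (1 - q ^ (ℓ + 1)) * R

end BirthDeath

/-- Equation (6.45): for all `m, ℓ ≥ 0`,
`Σ_{k=0}^{m−1} (q^k;q^{−1})_ℓ T̃_k/(λ̃_k π̃_k)
  = (q^{ℓ+α+1}(q^{m−ℓ};q)_{ℓ+1}/((1−q^{α+1})(1−q^{ℓ+α+2})))
    · (q^{ℓ+1}(1−q^{α+1})/(1−q^{ℓ+1}) + 1 − γ(m+1,α+1;q))`. -/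
theorem modified_qLaguerre_T_sum_finite_explicit
    (q α : ℝ) (hq0 : 0 < q) (hq1 : q < 1) (hα : -1 < α) (m ℓ : ℕ) :
    ∑ k ∈ Finset.range m,
        qPochDesc q k ℓ * TQL q α k / (lamQL q α k * piQL q α k)
      = q ^ ((ℓ : ℝ) + α + 1)
          * (∏ i ∈ Finset.range (ℓ + 1), (1 - q ^ ((m : ℝ) - (ℓ : ℝ) + (i : ℝ))))
          / ((1 - q ^ (α + 1)) * (1 - q ^ ((ℓ : ℝ) + α + 2)))
        * (q ^ ((ℓ : ℝ) + 1) * (1 - q ^ (α + 1)) / (1 - q ^ ((ℓ : ℝ) + 1))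
            + 1 - qgamma q ((m : ℝ) + 1) (α + 1)) := by
  have hsummand (k : ℕ) : qPochDesc q k ℓ * TQL q α k / (lamQL q α k * piQL q α k)
      = qPochDesc q k ℓ * (q ^ (α + 1) * q ^ k * gQL q α (k + 1) / (1 - q ^ (α + 1))) := by
    rw [mul_div_assoc, TQL_div_lamQL_mul_piQL hq0 hq1 hα]
  have hℓα1 : q ^ ((ℓ : ℝ) + α + 1) = q ^ ℓ * q ^ (α + 1) := by
    rw [add_assoc, rpow_add hq0, rpow_natCast]
  have hℓα2 : q ^ ((ℓ : ℝ) + α + 2) = q ^ (ℓ + 1) * q ^ (α + 1) := by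
    rw [show (ℓ : ℝ) + α + 2 = ((ℓ + 1 : ℕ) : ℝ) + (α + 1) by push_cast; ring, rpow_add hq0,
      rpow_natCast]
  have hℓ1 : q ^ ((ℓ : ℝ) + 1) = q ^ (ℓ + 1) := by exact_mod_cast rpow_natCast q (ℓ + 1)
  have hγ : qgamma q ((m : ℝ) + 1) (α + 1) = 1 - gQL q α (m + 1) := by simp [gQL]
  rw [sum_congr rfl fun k _ => hsummand k, sum_range_qPochDesc_mul_gQL hq0 hq1 hα,
    prod_range_one_sub_rpow_eq_qPochDesc, hℓα1, hℓα2, hℓ1, hγ]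
  ring
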